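/- Let a be an indeterminate (or a = q^m). For every nonnegative integer n, ∑_{k=0}^{n} qBinom(n,k)·q^{k(k-1)/2}·(1-q^{2k}a)/((q^k·a; q)_{n+1}) = (-1;q)_n/((q·a; q²)_n), as an identity of rational functions in q and a. -/

import Mathlib

/-- Gaussian (q-)binomial coefficient, via the q-Pascal recurrence. -/
def qbinom {K : Type*} [CommRing K] (q : K) : ℕ → ℕ → K
  | _, 0 => 1
  | 0, _ + 1 => 0
  | n + 1, k + 1 => qbinom q n k + q ^ (k + 1) * qbinom q n (k + 1)

/-- q-Pochhammer symbol `(c;q)_r = ∏_{j=0}^{r-1} (1 - c·q^j)`. -/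
def qpoch {K : Type*} [CommRing K] (c q : K) (r : ℕ) : K :=
  ∏ j ∈ Finset.range r, (1 - c * q ^ j)

/-- The field of rational functions in the two variables `q` and `a` over `ℚ`. -/
noncomputable abbrev Kqa : Type := FractionRing (MvPolynomial (Fin 2) ℚ)

/-- The variable `q`. -/
noncomputable def qv : Kqa :=
  algebraMap (MvPolynomial (Fin 2) ℚ) Kqa (MvPolynomial.X 0)

/-- The variable `a`. -/
noncomputable def av : Kqa :=
  algebraMap (MvPolynomial (Fin 2) ℚ) Kqa (MvPolynomial.X 1)

variable {K : Type*} [CommRing K]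

theorem qbinom_zero (q : K) (n : ℕ) : qbinom q n 0 = 1 := by cases n <;> rfl

theorem qbinom_succ_succ (q : K) (n k : ℕ) :
    qbinom q (n+1) (k+1) = qbinom q n k + q ^ (k+1) * qbinom q n (k+1) := rfl

theorem qbinom_eq_zero (q : K) : ∀ n k, n < k → qbinom q n k = 0 := by
  intro n
  induction n with
  | zero =>
    intro k hk
    cases k with
    | zero => omega
    | succ k => rfl
  | succ n ih =>
    intro k hk
    cases k with
    | zero => omega
    | succ k =>
      rw [qbinom_succ_succ, ih k (by omega), ih (k+1) (by omega)]
      ring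

theorem qbinom_geom (q : K) : ∀ m, (1 - q) * qbinom q m 1 = 1 - q ^ m := by
  intro m
  induction m with
  | zero => simp [qbinom]
  | succ m ih =>
    rw [show (1:ℕ) = 0 + 1 from rfl, qbinom_succ_succ, qbinom_zero]
    rw [pow_succ]
    linear_combination q * ih

theorem qbinom_absorb (q : K) : ∀ n κ m, n = κ + m →
    (1 - q ^ (κ+1)) * qbinom q n (κ+1) = (1 - q ^ m) * qbinom q n κ := by
  intro n
  induction n with
  | zero =>
    intro κ m h
    obtain ⟨rfl, rfl⟩ : κ = 0 ∧ m = 0 := by omega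
    simp [qbinom]
  | succ n ih =>
    intro κ m h
    cases κ with
    | zero =>
      obtain rfl : m = n + 1 := by omega
      simp only [Nat.zero_add, pow_one]
      rw [qbinom_zero, mul_one, qbinom_geom]
    | succ κ =>
      cases m with
      | zero =>
        rw [qbinom_eq_zero q (n+1) (κ+2) (by omega)]
        simp
      | succ m =>
        have h1 := ih (κ+1) m (by omega)
        have h2 := ih κ (m+1) (by omega)
        rw [qbinom_succ_succ, qbinom_succ_succ]
        linear_combination q ^ (κ+2) * h1 + h2

theorem qpoch_zero (c q : K) : qpoch c q 0 = 1 := Finset.prod_range_zero _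

theorem qpoch_succ (c q : K) (r : ℕ) :
    qpoch c q (r+1) = qpoch c q r * (1 - c * q ^ r) := Finset.prod_range_succ _ _

theorem qpoch_succ' (c q : K) (r : ℕ) :
    qpoch c q (r+1) = (1 - c) * qpoch (c * q) q r := by
  unfold qpoch
  rw [Finset.prod_range_succ', pow_zero, mul_one, mul_comm]
  congr 1
  refine Finset.prod_congr rfl fun j _ => ?_
  rw [pow_succ]
  ring

theorem qpoch_shift (c q : K) (r : ℕ) :
    (1 - c) * qpoch (c * q) q r = qpoch c q r * (1 - c * q ^ r) := by
  rw [← qpoch_succ', qpoch_succ]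

theorem qpoch_ne_zero {K : Type*} [Field K] {c q : K} {r : ℕ}
    (h : ∀ j : ℕ, 1 - c * q ^ j ≠ 0) : qpoch c q r ≠ 0 :=
  Finset.prod_ne_zero_iff.mpr fun j _ => h j

theorem tri' (k : ℕ) : (k+1) * k / 2 = k * (k-1) / 2 + k := by
  cases k with
  | zero => rfl
  | succ j =>
    simp only [Nat.add_sub_cancel]
    rw [show (j+1+1) * (j+1) = (j+1) * j + (j+1) * 2 from by ring,
      Nat.add_mul_div_right _ _ (by norm_num : (0:ℕ) < 2)]

noncomputable def cert {K : Type*} [Field K] (q a : K) (n : ℕ) : ℕ → K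
  | 0 => 0
  | k + 1 => qbinom q n k * q ^ (k*(k-1)/2) *
      (q ^ n - a * q ^ (k+1) + a * (q-1) * q ^ (n+k+1) - a * (q-1) * q ^ (2*k+1)
        - a * q ^ (n+2*k+2) + a ^ 2 * q ^ (3*k+3))
      / ((q * a - 1) * qpoch (q ^ (k+1) * a) q (n+2))

set_option maxHeartbeats 4000000 in
theorem key {K : Type*} [Field K] (q : K) (hq : ∀ j : ℕ, q ^ (j+1) ≠ 1) :
    ∀ n : ℕ, ∀ a : K, (∀ j : ℕ, q ^ j * a ≠ 1) →
      ∑ k ∈ Finset.range (n + 1),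
          qbinom q n k * q ^ (k * (k - 1) / 2) * (1 - q ^ (2 * k) * a)
            / qpoch (q ^ k * a) q (n + 1)
        = qpoch (-1) q n / qpoch (q * a) (q ^ 2) n := by
  intro n
  induction n with
  | zero =>
    intro a ha
    have h0 : (1:K) - a ≠ 0 := sub_ne_zero.mpr (by simpa using (ha 0).symm)
    rw [Finset.sum_range_one]
    simp [qpoch, qbinom_zero, div_self h0]
  | succ n IH =>
    intro a ha
    have hne : ∀ j : ℕ, (1:K) - q ^ j * a ≠ 0 := fun j => sub_ne_zero.mpr (ha j).symm
    have hqa : (1:K) - q * a ≠ 0 := by have := hne 1; rwa [pow_one] at this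
    have hqa' : q * a - 1 ≠ 0 := fun h => hqa (by linear_combination -h)
    have hqk : ∀ j : ℕ, (1:K) - q ^ (j+1) ≠ 0 := fun j => sub_ne_zero.mpr (hq j).symm
    have ha' : ∀ j : ℕ, q ^ j * (q ^ 2 * a) ≠ 1 := fun j => by
      have := ha (j+2); rwa [pow_add, mul_assoc] at this
    have step : ∀ k ∈ Finset.range (n+2),
        qbinom q (n+1) k * q ^ (k * (k - 1) / 2) * (1 - q ^ (2 * k) * a)
            / qpoch (q ^ k * a) q (n + 2)
        = (1 + q ^ n) / (1 - q * a) *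
            (qbinom q n k * q ^ (k * (k - 1) / 2) * (1 - q ^ (2 * k) * (q ^ 2 * a))
              / qpoch (q ^ k * (q ^ 2 * a)) q (n + 1))
          + (cert q a n (k+1) - cert q a n k) := by
      intro k hk
      simp only [Finset.mem_range] at hk
      cases k with
      | zero =>
        have h1 : (1:K) - a ≠ 0 := by have := hne 0; rwa [pow_zero, one_mul] at this
        have h2 : (1:K) - a*q ≠ 0 := by
          have := hne 1; rwa [pow_one, mul_comm] at this
        have hRden : (1:K) - a*q*q^(n+1) ≠ 0 := by
          have := hne (n+2); rwa [show q^(n+2)*a = a*q*q^(n+1) from by ring] at this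
        have hP : qpoch (a*q*q) q (n+1) ≠ 0 := qpoch_ne_zero fun j => by
          have := hne (j+2); rwa [show q^(j+2)*a = a*q*q*q^j from by ring] at this
        have hR : qpoch (a*q) q (n+1) = (1-a*q) * qpoch (a*q*q) q (n+1) / (1 - a*q*q^(n+1)) := by
          rw [eq_div_iff hRden]
          linear_combination -qpoch_shift (a*q) q (n+1)
        simp only [cert, qbinom_zero, Nat.zero_mul, Nat.zero_div, pow_zero, one_mul, mul_one,
          Nat.mul_zero, pow_one, Nat.zero_add, Nat.add_zero]
        rw [show qpoch a q (n+2) = (1-a) * qpoch (a*q) q (n+1) from qpoch_succ' a q (n+1)]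
        rw [show qpoch (q^2*a) q (n+1) = qpoch (a*q*q) q (n+1) from by
          rw [show q^2*a = a*q*q from by ring]]
        rw [show qpoch (q*a) q (n+2) = qpoch (a*q) q (n+1) * (1 - a*q*q^(n+1)) from by
          rw [show q*a = a*q from mul_comm q a]; exact qpoch_succ (a*q) q (n+1)]
        rw [hR]
        generalize qpoch (a*q*q) q (n+1) = P at hP ⊢
        have h3 : a * q - 1 ≠ 0 := fun h => h2 (by linear_combination -h)
        field_simp
        ring
      | succ κ =>
        obtain ⟨m, rfl⟩ : ∃ m, n = κ + m := ⟨n - κ, by omega⟩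
        have hBabs : qbinom q (κ+m) (κ+1)
            = (1 - q^m) * qbinom q (κ+m) κ / (1 - q^(κ+1)) := by
          rw [eq_div_iff (hqk κ)]
          linear_combination qbinom_absorb q (κ+m) κ m rfl
        have hu1 : (1:K) - q^(κ+1)*a ≠ 0 := hne (κ+1)
        have hu2 : (1:K) - q^(κ+2)*a ≠ 0 := hne (κ+2)
        have hun : (1:K) - q^(κ+2)*a*q^(κ+m+1) ≠ 0 := by
          have := hne (2*κ+m+3)
          rwa [show q^(2*κ+m+3)*a = q^(κ+2)*a*q^(κ+m+1) from by ring] at this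
        have hQ : qpoch (q^(κ+2)*a) q (κ+m+1) ≠ 0 := qpoch_ne_zero fun j => by
          have := hne (κ+2+j)
          rwa [show q^(κ+2+j)*a = q^(κ+2)*a*q^j from by ring] at this
        have hCrel : (1 - q^(κ+2)*a) * qpoch (q^(κ+3)*a) q (κ+m+1)
            = qpoch (q^(κ+2)*a) q (κ+m+1) * (1 - q^(κ+2)*a*q^(κ+m+1)) := by
          have h := qpoch_shift (q^(κ+2)*a) q (κ+m+1)
          rwa [show q^(κ+2)*a*q = q^(κ+3)*a from by ring] at h
        have habs := qbinom_absorb q (κ+m) κ m rfl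
        have hCne : qpoch (q^(κ+3)*a) q (κ+m+1) ≠ 0 := qpoch_ne_zero fun j => by
          have := hne (κ+3+j)
          rwa [show q^(κ+3+j)*a = q^(κ+3)*a*q^j from by ring] at this
        have eA : qpoch (q^(κ+1)*a) q (κ+m+2)
            = (1 - q^(κ+1)*a) * qpoch (q^(κ+2)*a) q (κ+m+1) := by
          rw [qpoch_succ', show q^(κ+1)*a*q = q^(κ+2)*a from by ring]
        have eB : qpoch (q^(κ+2)*a) q (κ+m+2)
            = qpoch (q^(κ+2)*a) q (κ+m+1) * (1 - q^(κ+2)*a*q^(κ+m+1)) := qpoch_succ _ q _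
        have eg : qpoch (q^(κ+1)*(q^2*a)) q (κ+m+1) = qpoch (q^(κ+3)*a) q (κ+m+1) := by
          rw [show q^(κ+1)*(q^2*a) = q^(κ+3)*a from by ring]
        simp only [cert, Nat.add_sub_cancel, show κ+1+1 = κ+2 from rfl]
        rw [qbinom_succ_succ]
        rw [tri' κ, pow_add q (κ*(κ-1)/2) κ]
        rw [eg, eA, eB]
        rw [div_mul_div_comm,
          div_sub_div _ _ (mul_ne_zero hqa' (mul_ne_zero hQ hun))
            (mul_ne_zero hqa' (mul_ne_zero hu1 hQ)),
          div_add_div _ _ (mul_ne_zero hqa hCne)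
            (mul_ne_zero (mul_ne_zero hqa' (mul_ne_zero hQ hun))
              (mul_ne_zero hqa' (mul_ne_zero hu1 hQ))),
          div_eq_div_iff (mul_ne_zero hu1 hQ)
            (mul_ne_zero (mul_ne_zero hqa hCne)
              (mul_ne_zero (mul_ne_zero hqa' (mul_ne_zero hQ hun))
                (mul_ne_zero hqa' (mul_ne_zero hu1 hQ))))]
        refine mul_left_cancel₀ (mul_ne_zero (hqk κ) hu2) ?_
        linear_combination
          (q^κ * q^(κ*(κ-1)/2) * (1 - q^(κ+1)) * (1-q*a)^2 * (1 - q^(κ+1)*a)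
            * (1 - q^(κ+2)*a*q^(κ+m+1))^2 * (qpoch (q^(κ+2)*a) q (κ+m+1))^3
            * (a*q*q^κ - a*q^2*q^κ + a*q^2*q^κ*q^κ - 1)) * habs
          + ((1 - q^(κ+1)) * (1-q*a) *
              (((qbinom q (κ+m) κ + q^(κ+1) * qbinom q (κ+m) (κ+1)) * (q^(κ*(κ-1)/2) * q^κ)
                  * (1 - q^(2*(κ+1))*a))
                * (((q*a-1) * (qpoch (q^(κ+2)*a) q (κ+m+1) * (1 - q^(κ+2)*a*q^(κ+m+1))))
                  * ((q*a-1) * ((1 - q^(κ+1)*a) * qpoch (q^(κ+2)*a) q (κ+m+1))))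
              - ((qbinom q (κ+m) (κ+1) * (q^(κ*(κ-1)/2) * q^κ)
                    * (q^(κ+m) - a*q^(κ+2) + a*(q-1)*q^(κ+m+κ+2) - a*(q-1)*q^(2*κ+3)
                        - a*q^(κ+m+2*κ+4) + a^2*q^(3*κ+6)))
                  * ((q*a-1) * ((1 - q^(κ+1)*a) * qpoch (q^(κ+2)*a) q (κ+m+1)))
                - ((q*a-1) * (qpoch (q^(κ+2)*a) q (κ+m+1) * (1 - q^(κ+2)*a*q^(κ+m+1))))
                  * (qbinom q (κ+m) κ * q^(κ*(κ-1)/2)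
                    * (q^(κ+m) - a*q^(κ+1) + a*(q-1)*q^(κ+m+κ+1) - a*(q-1)*q^(2*κ+1)
                        - a*q^(κ+m+2*κ+2) + a^2*q^(3*κ+3))))
                * ((1 - q^(κ+1)*a) * qpoch (q^(κ+2)*a) q (κ+m+1)))) * hCrel

    rw [Finset.sum_congr rfl step, Finset.sum_add_distrib, ← Finset.mul_sum,
      Finset.sum_range_sub (cert q a n)]
    have hc2 : cert q a n (n+2) = 0 := by
      show qbinom q n (n+1) * _ * _ / _ = 0
      rw [qbinom_eq_zero q n (n+1) (by omega)]
      simp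
    have hc0 : cert q a n 0 = 0 := rfl
    rw [hc2, hc0, sub_zero, add_zero, Finset.sum_range_succ,
      qbinom_eq_zero q n (n+1) (by omega)]
    simp only [zero_mul, zero_div, add_zero]
    rw [IH (q ^ 2 * a) ha']
    have e1 : qpoch (-1 : K) q (n+1) = qpoch (-1) q n * (1 + q ^ n) := by
      rw [qpoch_succ]; ring_nf
    have e2 : qpoch (q * a) (q ^ 2) (n+1) = (1 - q * a) * qpoch (q * (q ^ 2 * a)) (q ^ 2) n := by
      rw [qpoch_succ', show q * a * q ^ 2 = q * (q ^ 2 * a) from by ring]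
    rw [e1, e2, div_mul_div_comm]
    ring

theorem super_catalan_stmt17 (n : ℕ) :
    ∑ k ∈ Finset.range (n + 1),
        qbinom qv n k * qv ^ (k * (k - 1) / 2) * (1 - qv ^ (2 * k) * av)
          / qpoch (qv ^ k * av) qv (n + 1)
      = qpoch (-1) qv n / qpoch (qv * av) (qv ^ 2) n := by
  have hinj : Function.Injective (algebraMap (MvPolynomial (Fin 2) ℚ) Kqa) :=
    IsFractionRing.injective _ _
  have hq : ∀ j : ℕ, qv ^ (j+1) ≠ 1 := by
    intro j h
    rw [qv, ← map_pow, show (1 : Kqa) = algebraMap (MvPolynomial (Fin 2) ℚ) Kqa 1 from (map_one _).symm] at h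
    have h2 := hinj h
    have h3 := congrArg (MvPolynomial.eval (fun _ => (0:ℚ))) h2
    simp at h3
  have ha : ∀ j : ℕ, qv ^ j * av ≠ 1 := by
    intro j h
    rw [qv, av, ← map_pow, ← map_mul,
      show (1 : Kqa) = algebraMap (MvPolynomial (Fin 2) ℚ) Kqa 1 from (map_one _).symm] at h
    have h2 := hinj h
    have h3 := congrArg (MvPolynomial.eval (fun _ => (0:ℚ))) h2
    simp at h3
  exact key qv hq n av ha
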